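/- Let A be a unital complex star-algebra with a positive unital trace τ, and let u₁, u₂ be unitaries in A with u_i = Σ_{j=1}^n λ_j p_{ij}, where λ₁, …, λ_n are complex numbers of modulus 1 and, for each i, the p_{ij} are projections summing to 1 with p_{ij}p_{ik} = 0 for j ≠ k. Suppose the λ_j are pairwise at radian distance at least κ on the unit circle, with 0 < κ ≤ π. Then τ((u₁−u₂)*(u₁−u₂)) ≥ 2 − 2cos(κ) − 2(1 − cos(κ))·Σ_{j=1}^n τ(p_{1j}p_{2j}). -/
import Mathlib


open scoped ComplexOrder

lemma aux_cos_bound (κ x : ℝ) (hκ0 : 0 < κ) (hκπ : κ ≤ Real.pi)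
    (h : ∀ m : ℤ, κ ≤ |x + 2 * Real.pi * m|) : Real.cos x ≤ Real.cos κ := by
  set m : ℤ := -round (x / (2 * Real.pi)) with hm
  have hpi : (0:ℝ) < 2 * Real.pi := by positivity
  have h3 : (x / (2 * Real.pi) - round (x / (2 * Real.pi))) * (2 * Real.pi) = x + 2 * Real.pi * m := by
    push_cast [hm]
    field_simp
    ring
  have hy : |x + 2 * Real.pi * m| ≤ Real.pi := by
    have h1 : |x / (2 * Real.pi) - round (x / (2 * Real.pi))| ≤ 1/2 := abs_sub_round _
    calc |x + 2 * Real.pi * m| = |x / (2 * Real.pi) - round (x / (2 * Real.pi))| * (2 * Real.pi) := by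
          rw [← h3, abs_mul, abs_of_pos hpi]
      _ ≤ 1/2 * (2 * Real.pi) := mul_le_mul_of_nonneg_right h1 (le_of_lt hpi)
      _ = Real.pi := by ring
  have hcos : Real.cos x = Real.cos |x + 2 * Real.pi * m| := by
    rw [Real.cos_abs]
    have : x + 2 * Real.pi * m = x + (m : ℝ) * (2 * Real.pi) := by ring
    rw [this, Real.cos_add_int_mul_two_pi]
  rw [hcos]
  exact Real.cos_le_cos_of_nonneg_of_le_pi (le_of_lt hκ0) hy (h m)

lemma aux_real_ineq (n : ℕ) (c t : Fin n → Fin n → ℝ) (cκ : ℝ)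
    (hc : ∀ j k, j ≠ k → c j k ≤ cκ) (hcd : ∀ j, c j j = 1)
    (ht : ∀ j k, 0 ≤ t j k) (hsum : ∑ j, ∑ k, t j k = 1) :
    ∑ j, ∑ k, c j k * t j k ≤ (∑ j, t j j) + cκ * (1 - ∑ j, t j j) := by
  calc ∑ j, ∑ k, c j k * t j k
      = ∑ j, (c j j * t j j + ∑ k ∈ Finset.univ.erase j, c j k * t j k) := by
        refine Finset.sum_congr rfl fun j _ => ?_
        exact (Finset.add_sum_erase _ _ (Finset.mem_univ j)).symm
    _ ≤ ∑ j, (t j j + cκ * ∑ k ∈ Finset.univ.erase j, t j k) := by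
        refine Finset.sum_le_sum fun j _ => ?_
        refine add_le_add (le_of_eq (by rw [hcd]; ring)) ?_
        rw [Finset.mul_sum]
        refine Finset.sum_le_sum fun k hk => ?_
        exact mul_le_mul_of_nonneg_right (hc j k (Finset.ne_of_mem_erase hk).symm) (ht j k)
    _ = (∑ j, t j j) + cκ * ∑ j, ∑ k ∈ Finset.univ.erase j, t j k := by
        rw [Finset.sum_add_distrib, ← Finset.mul_sum]
    _ = (∑ j, t j j) + cκ * (1 - ∑ j, t j j) := by
        have he : ∑ j, ∑ k ∈ Finset.univ.erase j, t j k = (∑ j, ∑ k, t j k) - ∑ j, t j j := by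
          rw [← Finset.sum_sub_distrib]
          refine Finset.sum_congr rfl fun j _ => ?_
          rw [← Finset.add_sum_erase _ _ (Finset.mem_univ j)]
          ring
        rw [he, hsum]

theorem stmt_11 {A : Type*} [Ring A] [StarRing A] [Algebra ℂ A]
    (τ : A →ₗ[ℂ] ℂ) (hτ1 : τ 1 = 1)
    (hτtr : ∀ a b : A, τ (a * b) = τ (b * a))
    (hτpos : ∀ x : A, 0 ≤ τ (star x * x))
    (n : ℕ) (κ : ℝ) (hκ0 : 0 < κ) (hκπ : κ ≤ Real.pi)
    (θ : Fin n → ℝ) (l : Fin n → ℂ)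
    (hl : ∀ j, l j = Complex.exp (θ j * Complex.I))
    (hθ : ∀ j k, j ≠ k → ∀ m : ℤ, κ ≤ |θ j - θ k + 2 * Real.pi * m|)
    (p q : Fin n → A)
    (hpproj : ∀ j, star (p j) = p j ∧ p j * p j = p j)
    (hqproj : ∀ j, star (q j) = q j ∧ q j * q j = q j)
    (hporth : ∀ j k, j ≠ k → p j * p k = 0)
    (hqorth : ∀ j k, j ≠ k → q j * q k = 0)
    (hpsum : ∑ j, p j = 1) (hqsum : ∑ j, q j = 1)
    (u₁ u₂ : A) (hu₁ : u₁ = ∑ j, l j • p j) (hu₂ : u₂ = ∑ j, l j • q j)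
    (hu₁unitary : star u₁ * u₁ = 1 ∧ u₁ * star u₁ = 1)
    (hu₂unitary : star u₂ * u₂ = 1 ∧ u₂ * star u₂ = 1) :
    ((2 - 2 * Real.cos κ - 2 * (1 - Real.cos κ) * ∑ j, (τ (p j * q j)).re : ℝ) : ℂ) ≤
      τ (star (u₁ - u₂) * (u₁ - u₂)) := by
  -- the unimodular scalars multiply with their conjugates to 1
  have hll : ∀ j, l j * (starRingEnd ℂ) (l j) = 1 := by
    intro j
    rw [hl j, Complex.mul_conj, Complex.normSq_eq_norm_sq, Complex.norm_exp_ofReal_mul_I]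
    norm_num
  -- star u₁ and star u₂ have explicit forms
  have hstar : ∀ (u : A) (r : Fin n → A), (∀ j, star (r j) = r j ∧ r j * r j = r j) →
      (∀ j k, j ≠ k → r j * r k = 0) → (∑ j, r j = 1) → (u = ∑ j, l j • r j) →
      star u * u = 1 → star u = ∑ j, (starRingEnd ℂ) (l j) • r j := by
    intro u r hproj horth hsum hu hunit
    set v := ∑ j, (starRingEnd ℂ) (l j) • r j with hv
    have huv : u * v = 1 := by
      rw [hu, hv, Finset.sum_mul_sum]
      simp_rw [smul_mul_smul_comm]
      rw [← hsum]
      refine Finset.sum_congr rfl fun j _ => ?_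
      rw [Finset.sum_eq_single j]
      · rw [hll j, (hproj j).2, one_smul]
      · intro k _ hkj
        rw [horth j k (Ne.symm hkj), smul_zero]
      · intro h
        exact absurd (Finset.mem_univ j) h
    calc star u = star u * (u * v) := by rw [huv, mul_one]
      _ = (star u * u) * v := by rw [mul_assoc]
      _ = v := by rw [hunit, one_mul]
  have hstar1 : star u₁ = ∑ j, (starRingEnd ℂ) (l j) • p j :=
    hstar u₁ p hpproj hporth hpsum hu₁ hu₁unitary.1
  have hstar2 : star u₂ = ∑ j, (starRingEnd ℂ) (l j) • q j :=
    hstar u₂ q hqproj hqorth hqsum hu₂ hu₂unitary.1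
  -- each τ (p j * q k) is a nonnegative real
  have hτreal : ∀ j k, τ (p j * q k) = ((τ (p j * q k)).re : ℂ) ∧ 0 ≤ (τ (p j * q k)).re := by
    intro j k
    have e1 : star (q k * p j) * (q k * p j) = (p j * q k) * p j := by
      rw [star_mul, (hpproj j).1, (hqproj k).1]
      have e : (p j * q k) * (q k * p j) = p j * (q k * q k) * p j := by noncomm_ring
      rw [e, (hqproj k).2]
    have e2 : τ ((p j * q k) * p j) = τ (p j * q k) := by
      rw [hτtr, ← mul_assoc, (hpproj j).2]
    have hpos : 0 ≤ τ (p j * q k) := by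
      rw [← e2, ← e1]
      exact hτpos (q k * p j)
    obtain ⟨h1, h2⟩ := Complex.le_def.mp hpos
    refine ⟨Complex.ext rfl (by simpa using h2.symm), by simpa using h1⟩
  -- the τ's sum to 1
  have hsum1 : ∑ j, ∑ k, (τ (p j * q k)).re = 1 := by
    have e : (1:A) = ∑ j, ∑ k, p j * q k := by
      rw [← Finset.sum_mul_sum, hpsum, hqsum, one_mul]
    have h := congrArg τ e
    rw [hτ1, map_sum] at h
    simp_rw [map_sum] at h
    have h' := congrArg Complex.re h
    rw [Complex.re_sum] at h'
    simp_rw [Complex.re_sum] at h'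
    simpa using h'.symm
  -- cross terms
  have hX : τ (star u₁ * u₂) = ∑ j, ∑ k, ((starRingEnd ℂ) (l j) * l k) * τ (p j * q k) := by
    rw [hstar1, hu₂, Finset.sum_mul_sum, map_sum]
    refine Finset.sum_congr rfl fun j _ => ?_
    rw [map_sum]
    refine Finset.sum_congr rfl fun k _ => ?_
    rw [smul_mul_smul_comm, map_smul, smul_eq_mul]
  have hY : τ (star u₂ * u₁) = ∑ j, ∑ k, ((starRingEnd ℂ) (l j) * l k) * τ (q j * p k) := by
    rw [hstar2, hu₁, Finset.sum_mul_sum, map_sum]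
    refine Finset.sum_congr rfl fun j _ => ?_
    rw [map_sum]
    refine Finset.sum_congr rfl fun k _ => ?_
    rw [smul_mul_smul_comm, map_smul, smul_eq_mul]
  -- expansion of the norm
  have hexp : τ (star (u₁ - u₂) * (u₁ - u₂)) = 2 - τ (star u₁ * u₂) - τ (star u₂ * u₁) := by
    have e : star (u₁ - u₂) * (u₁ - u₂) =
        (star u₁ * u₁ + star u₂ * u₂) - star u₁ * u₂ - star u₂ * u₁ := by
      rw [star_sub]; noncomm_ring
    rw [e, map_sub, map_sub, map_add, hu₁unitary.1, hu₂unitary.1, hτ1]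
    ring
  -- coefficients
  have hcdiag : ∀ j, ((starRingEnd ℂ) (l j) * l j).re = 1 := by
    intro j
    rw [mul_comm, hll j]
    norm_num
  have hcsymm : ∀ j k, ((starRingEnd ℂ) (l k) * l j).re = ((starRingEnd ℂ) (l j) * l k).re := by
    intro j k
    have e : (starRingEnd ℂ) (l k) * l j = (starRingEnd ℂ) ((starRingEnd ℂ) (l j) * l k) := by
      rw [map_mul, Complex.conj_conj, mul_comm]
    rw [e, Complex.conj_re]
  have hcoff : ∀ j k, j ≠ k → ((starRingEnd ℂ) (l j) * l k).re ≤ Real.cos κ := by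
    intro j k hjk
    have e : (starRingEnd ℂ) (l j) * l k = Complex.exp (((θ k - θ j : ℝ) : ℂ) * Complex.I) := by
      rw [hl j, hl k, ← Complex.exp_conj, ← Complex.exp_add]
      congr 1
      rw [map_mul, Complex.conj_ofReal, Complex.conj_I]
      push_cast
      ring
    rw [e, Complex.exp_ofReal_mul_I_re]
    exact aux_cos_bound κ _ hκ0 hκπ (fun m => hθ k j (Ne.symm hjk) m)
  -- main bound on the real double sum
  have hbound : ∑ j, ∑ k, ((starRingEnd ℂ) (l j) * l k).re * (τ (p j * q k)).re ≤
      (∑ j, (τ (p j * q j)).re) + Real.cos κ * (1 - ∑ j, (τ (p j * q j)).re) :=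
    aux_real_ineq n (fun j k => ((starRingEnd ℂ) (l j) * l k).re)
      (fun j k => (τ (p j * q k)).re) (Real.cos κ) hcoff hcdiag
      (fun j k => (hτreal j k).2) hsum1
  -- real parts of the cross terms
  have hXre : (τ (star u₁ * u₂)).re =
      ∑ j, ∑ k, ((starRingEnd ℂ) (l j) * l k).re * (τ (p j * q k)).re := by
    rw [hX, Complex.re_sum]
    refine Finset.sum_congr rfl fun j _ => ?_
    rw [Complex.re_sum]
    refine Finset.sum_congr rfl fun k _ => ?_
    rw [(hτreal j k).1]
    simp
  have hYre : (τ (star u₂ * u₁)).re =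
      ∑ j, ∑ k, ((starRingEnd ℂ) (l j) * l k).re * (τ (p j * q k)).re := by
    rw [hY, Complex.re_sum]
    have e : ∀ j k, ((starRingEnd ℂ) (l j) * l k) * τ (q j * p k) =
        (((starRingEnd ℂ) (l j) * l k) : ℂ) * τ (p k * q j) := by
      intro j k
      rw [hτtr]
    simp_rw [Complex.re_sum, e]
    rw [Finset.sum_comm]
    refine Finset.sum_congr rfl fun j _ => ?_
    refine Finset.sum_congr rfl fun k _ => ?_
    rw [(hτreal j k).1]
    simp [hcsymm]
  -- conclude
  rw [Complex.le_def]
  constructor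
  · rw [hexp]
    have h2re : (2:ℂ).re = 2 := by norm_num
    simp only [Complex.ofReal_re, Complex.sub_re, h2re]
    rw [hXre, hYre]
    nlinarith [hbound]
  · simp only [Complex.ofReal_im]
    exact (Complex.le_def.mp (hτpos (u₁ - u₂))).2
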